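/- Let 𝒜 be a family of subsets of some set with VC dimension V ≥ 1, and n ≥ V. Then the n-th shatter coefficient satisfies S_n(𝒜) ≤ (ne/V)^V. -/

import Mathlib

/-- A family of sets `A` shatters a finite set `F` if every subset of `F` can be
picked out by a member of `A`. -/
def Shatters {α : Type*} (A : Set (Set α)) (F : Finset α) : Prop :=
  ∀ S ⊆ F, ∃ a ∈ A, ∀ x ∈ F, x ∈ a ↔ x ∈ S

/-- The number of subsets of `F` picked out by the family `A` (the trace count). -/
noncomputable def traceCount {α : Type*} (A : Set (Set α)) (F : Finset α) : ℕ :=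
  Set.ncard ((fun a => a ∩ (F : Set α)) '' A)


lemma sum_choose_le_exp (V n : ℕ) (hV1 : 1 ≤ V) (hn : V ≤ n) :
    ((∑ k ∈ Finset.Iic V, n.choose k : ℕ) : ℝ) ≤ (n * Real.exp 1 / V) ^ V := by
  have hn1 : 1 ≤ n := hV1.trans hn
  have hnpos : (0:ℝ) < n := by exact_mod_cast hn1
  have hVpos : (0:ℝ) < V := by exact_mod_cast hV1
  set x : ℝ := V / n with hx
  have hxpos : 0 < x := by positivity
  have hx1 : x ≤ 1 := by
    rw [hx, div_le_one hnpos]; exact_mod_cast hn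
  have key : x ^ V * (∑ k ∈ Finset.Iic V, (n.choose k : ℝ)) ≤ (x + 1) ^ n := by
    rw [Finset.mul_sum]
    calc ∑ k ∈ Finset.Iic V, x ^ V * (n.choose k : ℝ)
        ≤ ∑ k ∈ Finset.Iic V, x ^ k * (1:ℝ) ^ (n - k) * (n.choose k : ℝ) := by
          apply Finset.sum_le_sum
          intro k hk
          rw [one_pow, mul_one]
          apply mul_le_mul_of_nonneg_right _ (by positivity)
          exact pow_le_pow_of_le_one hxpos.le hx1 (Finset.mem_Iic.1 hk)
      _ ≤ ∑ k ∈ Finset.range (n+1), x ^ k * (1:ℝ) ^ (n - k) * (n.choose k : ℝ) := by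
          apply Finset.sum_le_sum_of_subset_of_nonneg
          · intro k hk
            simp only [Finset.mem_Iic, Finset.mem_range] at *
            omega
          · intro k _ _; positivity
      _ = (x + 1) ^ n := (add_pow x 1 n).symm
  have hexp : (x + 1) ^ n ≤ Real.exp 1 ^ V := by
    calc (x + 1) ^ n ≤ Real.exp x ^ n := by
          apply pow_le_pow_left₀ (by positivity) (Real.add_one_le_exp x)
      _ = Real.exp (x * n) := by rw [← Real.exp_nat_mul]; ring_nf
      _ = Real.exp V := by rw [hx, div_mul_cancel₀]; exact hnpos.ne'
      _ = Real.exp 1 ^ V := by rw [← Real.exp_nat_mul, mul_one]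
  have : (∑ k ∈ Finset.Iic V, (n.choose k : ℝ)) ≤ Real.exp 1 ^ V / x ^ V := by
    rw [le_div_iff₀ (by positivity)]
    calc (∑ k ∈ Finset.Iic V, (n.choose k : ℝ)) * x ^ V
        = x ^ V * ∑ k ∈ Finset.Iic V, (n.choose k : ℝ) := by ring
      _ ≤ (x+1)^n := key
      _ ≤ Real.exp 1 ^ V := hexp
  calc ((∑ k ∈ Finset.Iic V, n.choose k : ℕ) : ℝ)
      = ∑ k ∈ Finset.Iic V, (n.choose k : ℝ) := by push_cast; rfl
    _ ≤ Real.exp 1 ^ V / x ^ V := this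
    _ = (Real.exp 1 / x) ^ V := (div_pow _ _ _).symm
    _ = (n * Real.exp 1 / V) ^ V := by
        congr 1
        rw [hx]
        field_simp


private theorem stmt11_comb {α : Type*} (A : Set (Set α)) (V n : ℕ)
    (hvc : ∀ F : Finset α, Shatters A F → F.card ≤ V) :
    ∀ F : Finset α, F.card = n →
      traceCount A F ≤ ∑ k ∈ Finset.Iic V, n.choose k := by
  classical
  intro F hF
  set 𝒜 : Finset (Finset α) :=
    F.powerset.filter (fun t => ∃ a ∈ A, (↑t : Set α) = a ∩ ↑F) with h𝒜
  have coe_g : ∀ s ∈ (fun a => a ∩ (F : Set α)) '' A,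
      ((F.filter (· ∈ s) : Finset α) : Set α) = s := by
    intro s hs
    have hsF : s ⊆ ↑F := by obtain ⟨a, _, rfl⟩ := hs; exact Set.inter_subset_right
    ext x
    simp only [Finset.coe_filter, Set.mem_setOf_eq, Finset.mem_coe]
    exact ⟨fun h => h.2, fun h => ⟨hsF h, h⟩⟩
  have htc : traceCount A F = 𝒜.card := by
    rw [traceCount, ← Set.ncard_coe_finset]
    have himg : (fun s : Set α => F.filter (· ∈ s)) '' ((fun a => a ∩ (F : Set α)) '' A)
        = (𝒜 : Set (Finset α)) := by
      ext t
      constructor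
      · rintro ⟨s, hs, rfl⟩
        rw [Finset.mem_coe, h𝒜, Finset.mem_filter, Finset.mem_powerset]
        obtain ⟨a, ha, hsa⟩ := hs
        refine ⟨fun x hx => (Finset.mem_filter.1 hx).1, a, ha, ?_⟩
        rw [coe_g s ⟨a, ha, hsa⟩]
        exact hsa.symm
      · intro ht
        simp only [h𝒜, Finset.mem_coe, Finset.mem_filter, Finset.mem_powerset] at ht
        obtain ⟨htF, a, ha, hta⟩ := ht
        refine ⟨a ∩ ↑F, ⟨a, ha, rfl⟩, ?_⟩
        apply Finset.coe_injective
        rw [coe_g (a ∩ ↑F) ⟨a, ha, rfl⟩, hta]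
    rw [← himg]
    symm
    apply Set.ncard_image_of_injOn
    intro s hs s' hs' h
    rw [← coe_g s hs, ← coe_g s' hs']
    exact congrArg _ h
  have hshat : ∀ s : Finset α, Finset.Shatters 𝒜 s → s.card ≤ V := by
    intro s hs
    apply hvc
    intro S hS
    have hsF : s ⊆ F := by
      obtain ⟨u, hu, hsu⟩ := hs (Finset.Subset.refl s)
      have : s ⊆ u := by rw [← hsu]; exact Finset.inter_subset_right
      simp only [h𝒜, Finset.mem_filter, Finset.mem_powerset] at hu
      exact this.trans hu.1
    obtain ⟨u, hu, hsu⟩ := hs hS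
    simp only [h𝒜, Finset.mem_filter, Finset.mem_powerset] at hu
    obtain ⟨_, a, ha, hua⟩ := hu
    refine ⟨a, ha, fun x hx => ?_⟩
    have hxF : x ∈ F := hsF hx
    have h1 : x ∈ a ↔ x ∈ u := by
      constructor
      · intro hxa
        have : (x : α) ∈ (↑u : Set α) := by rw [hua]; exact ⟨hxa, hxF⟩
        exact this
      · intro hxu
        have : (x : α) ∈ (↑u : Set α) := hxu
        rw [hua] at this
        exact this.1
    rw [h1, ← hsu, Finset.mem_inter]
    simp [hx]
  rw [htc]
  calc 𝒜.card ≤ 𝒜.shatterer.card := Finset.card_le_card_shatterer 𝒜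
    _ ≤ ((Finset.Iic V).biUnion (fun k => F.powersetCard k)).card := by
        apply Finset.card_le_card
        intro s hs
        rw [Finset.mem_shatterer] at hs
        have hsV : s.card ≤ V := hshat s hs
        have hsF : s ⊆ F := by
          obtain ⟨u, hu, hsu⟩ := hs (Finset.Subset.refl s)
          have : s ⊆ u := by rw [← hsu]; exact Finset.inter_subset_right
          simp only [h𝒜, Finset.mem_filter, Finset.mem_powerset] at hu
          exact this.trans hu.1
        exact Finset.mem_biUnion.2 ⟨s.card, Finset.mem_Iic.2 hsV,
          Finset.mem_powersetCard.2 ⟨hsF, rfl⟩⟩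
    _ ≤ ∑ k ∈ Finset.Iic V, (F.powersetCard k).card := Finset.card_biUnion_le
    _ = ∑ k ∈ Finset.Iic V, n.choose k := by
        simp [Finset.card_powersetCard, hF]

/-- Sauer–Shelah–Vapnik: if the VC dimension of `A` is `V ≥ 1`
and `n ≥ V`, then the `n`-th shatter coefficient satisfies `Sₙ(A) ≤ (ne/V)^V`. -/
theorem stmt11 {α : Type*} (A : Set (Set α)) (V n : ℕ) (hV1 : 1 ≤ V)
    (hshat : ∃ F : Finset α, F.card = V ∧ Shatters A F)
    (hvc : ∀ F : Finset α, Shatters A F → F.card ≤ V)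
    (hn : V ≤ n) :
    ∀ F : Finset α, F.card = n →
      (traceCount A F : ℝ) ≤ (n * Real.exp 1 / V) ^ V := by
  intro F hF
  calc (traceCount A F : ℝ)
      ≤ ((∑ k ∈ Finset.Iic V, n.choose k : ℕ) : ℝ) := by
        exact_mod_cast stmt11_comb A V n hvc F hF
    _ ≤ (n * Real.exp 1 / V) ^ V := sum_choose_le_exp V n hV1 hn
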